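/- Let C ⊆ F_q^n be a linear code of dimension k, minimum distance d and genus g = n+1−k−d ≥ 1, whose dual code has minimum distance d⊥ and genus g⊥ = k+1−d⊥ ≥ 1, and set r = g + g⊥. Suppose c_0, …, c_{r−2} ∈ ℚ satisfy W_C(x,y) = M_{n,n+1−k}(x,y) + (q−1)·Σ_{i=0}^{r−2} c_i·C(n,d+i)·(x−y)^{n−d−i}·y^{d+i}. Then the weight enumerator is determined by the numbers W_C^{(d)}, …, W_C^{(d+r−2)} via the identity W_C(x,y) = Σ_{w=d}^{d+r−2} W_C^{(w)}·λ_w(x,y) + Λ(x,y), where λ_w(x,y) = Σ_{s=w}^{d+r−2} C(n−w, n−s)·(x−y)^{n−s}·y^{s} for d ≤ w ≤ d+r−2, and Λ(x,y) = M_{n,n+1−k}(x,y) − Σ_{w=d+g}^{d+r−2} M_{n,n+1−k}^{(w)}·λ_w(x,y), with M_{n,n+1−k}^{(w)} the coefficient of x^{n−w}y^{w} in M_{n,n+1−k}(x,y). -/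

import Mathlib

/-- The number `W_C^{(w)}` of codewords of the linear code `C` of Hamming weight `w`. -/
noncomputable def wtCount {F : Type*} [Field F] [Fintype F] [DecidableEq F] {n : ℕ}
    (C : Submodule F (Fin n → F)) (w : ℕ) : ℕ :=
  Nat.card {c : Fin n → F // c ∈ C ∧ hammingNorm c = w}

/-- The homogeneous weight enumerator `W_C(x,y) = x^n + Σ_{w=d}^n W_C^{(w)} x^{n-w} y^w`
of a code `C` of minimum distance `d`, evaluated at rationals `x, y`. -/
noncomputable def wEnum {F : Type*} [Field F] [Fintype F] [DecidableEq F] {n : ℕ}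
    (C : Submodule F (Fin n → F)) (d : ℕ) (x y : ℚ) : ℚ :=
  x ^ n + ∑ w ∈ Finset.Icc d n, (wtCount C w : ℚ) * x ^ (n - w) * y ^ w

/-- The coefficient of `x^{n-w} y^w` in the MDS weight enumerator `M_{n,s}(x,y)`
(for `s ≤ w ≤ n`). -/
noncomputable def MdsCoeff (q n s w : ℕ) : ℚ :=
  (n.choose w : ℚ) * ∑ i ∈ Finset.range (w - s + 1),
    (-1 : ℚ) ^ i * (w.choose i : ℚ) * ((q : ℚ) ^ (w + 1 - s - i) - 1)

/-- The MDS weight enumerator `M_{n,s}(x,y)` over a field with `q` elements,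
evaluated at rationals `x, y`. -/
noncomputable def Mds (q n s : ℕ) (x y : ℚ) : ℚ :=
  x ^ n + ∑ w ∈ Finset.Icc s n, MdsCoeff q n s w * x ^ (n - w) * y ^ w

/-- The polynomial `λ_w(x,y) = Σ_{s=w}^{d+r-2} C(n−w, n−s)·(x−y)^{n−s}·y^{s}`,
where `r = g + g⊥`. -/
noncomputable def lamPoly (n d r w : ℕ) (x y : ℚ) : ℚ :=
  ∑ s ∈ Finset.Icc w (d + r - 2), ((n - w).choose (n - s) : ℚ) * (x - y) ^ (n - s) * y ^ s

/-! Put `a_w = W_C^{(w)} - M^{(w)}`, so that `W_C - M = ∑_{w ≥ d} a_w x^(n-w) y^w`. Expanding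
`x = (x - y) + y` binomially, the coefficient of `(x - y)^(n-s) y^s` in this difference is
`∑_{w=d}^{s} a_w C(n-w, n-s)`. By hypothesis the difference only involves the monomials with
`s ≤ d + r - 2`, so these coefficients vanish for larger `s` (compare coefficients after setting
`x - y = 1`), and dropping them leaves exactly `∑_{w=d}^{d+r-2} a_w λ_w`. -/

open Finset

section CoefficientAlgebra

variable {R : Type*} [CommRing R]

theorem eq_of_forall_sum_mul_pow_eq {K : Type*} [Field K] [Infinite K] {S : Finset ℕ}
    {f g : ℕ → K} (h : ∀ v : K, ∑ s ∈ S, f s * v ^ s = ∑ s ∈ S, g s * v ^ s) :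
    ∀ s ∈ S, f s = g s := by
  have hpoly : ∑ s ∈ S, Polynomial.monomial s (f s) = ∑ s ∈ S, Polynomial.monomial s (g s) :=
    Polynomial.funext fun v => by
      simpa [Polynomial.eval_finsetSum, Polynomial.eval_monomial] using h v
  intro s hs
  simpa [Polynomial.finsetSum_coeff, Polynomial.coeff_monomial, hs] using
    congrArg (Polynomial.coeff · s) hpoly

theorem pow_mul_pow_eq_sum_sub_pow (x y : R) {w n : ℕ} (hw : w ≤ n) :
    x ^ (n - w) * y ^ w =
      ∑ s ∈ Icc w n, ((n - w).choose (n - s) : R) * ((x - y) ^ (n - s) * y ^ s) := by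
  conv_lhs => rw [← sub_add_cancel x y]
  rw [add_pow, sum_mul, ← Ico_add_one_right_eq_Icc, sum_Ico_eq_sum_range,
    show n + 1 - w = n - w + 1 by omega, ← sum_range_reflect]
  refine sum_congr rfl fun i hi => ?_
  rw [mem_range] at hi
  rw [show n - w + 1 - 1 - i = n - w - i by omega, show n - (w + i) = n - w - i by omega,
    show n - w - (n - w - i) = i by omega, add_comm w i, pow_add]
  ring

theorem sum_Icc_sub_sum_Icc {d e B : ℕ} (hde : d ≤ e) (u v f : ℕ → R) :
    ∑ w ∈ Icc d B, u w * f w - ∑ w ∈ Icc e B, v w * f w =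
      ∑ w ∈ Icc d B, (u w - if e ≤ w then v w else 0) * f w := by
  have hfilter : (Icc d B).filter (e ≤ ·) = Icc e B := by
    ext w
    simp only [mem_filter, mem_Icc]
    omega
  simp only [sub_mul, sum_sub_distrib, ite_mul, zero_mul, ← sum_filter, hfilter]

/-- The coefficient of `(x - y)^(n-s) y^s` in `∑_{w=d}^{n} a_w x^(n-w) y^w`; only `w ≤ s`
contribute. -/
def shiftCoeff (n d : ℕ) (a : ℕ → R) (s : ℕ) : R :=
  ∑ w ∈ Icc d s, a w * ((n - w).choose (n - s) : R)

theorem sum_mul_sum_choose_eq_sum_shiftCoeff (n d m : ℕ) (a f : ℕ → R) :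
    ∑ w ∈ Icc d m, a w * ∑ s ∈ Icc w m, ((n - w).choose (n - s) : R) * f s =
      ∑ s ∈ Icc d m, shiftCoeff n d a s * f s := by
  simp only [mul_sum, shiftCoeff, sum_mul, ← mul_assoc]
  exact sum_comm' (fun w s => by simp only [mem_Icc]; omega)

theorem sum_mul_pow_eq_sum_shiftCoeff (n d : ℕ) (a : ℕ → R) (x y : R) :
    ∑ w ∈ Icc d n, a w * (x ^ (n - w) * y ^ w) =
      ∑ s ∈ Icc d n, shiftCoeff n d a s * ((x - y) ^ (n - s) * y ^ s) := by
  rw [← sum_mul_sum_choose_eq_sum_shiftCoeff]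
  exact sum_congr rfl fun w hw => by rw [pow_mul_pow_eq_sum_sub_pow x y (mem_Icc.mp hw).2]

end CoefficientAlgebra

theorem sum_mul_pow_eq_sum_mul_lamPoly {n d r : ℕ} (hn : d + r - 2 ≤ n) (a b : ℕ → ℚ)
    (h : ∀ x y : ℚ, ∑ w ∈ Icc d n, a w * (x ^ (n - w) * y ^ w) =
      ∑ s ∈ Icc d (d + r - 2), b s * ((x - y) ^ (n - s) * y ^ s)) (x y : ℚ) :
    ∑ w ∈ Icc d n, a w * (x ^ (n - w) * y ^ w) =
      ∑ w ∈ Icc d (d + r - 2), a w * lamPoly n d r w x y := by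
  set m := d + r - 2
  have hhigh : ∀ s ∈ Icc d n, shiftCoeff n d a s = if s ≤ m then b s else 0 := by
    refine eq_of_forall_sum_mul_pow_eq fun v => ?_
    have hfilter : (Icc d n).filter (· ≤ m) = Icc d m := by
      ext s
      simp only [mem_filter, mem_Icc]
      omega
    have hv := h (1 + v) v
    simp only [sum_mul_pow_eq_sum_shiftCoeff, add_sub_cancel_right, one_pow, one_mul] at hv
    simp only [hv, ite_mul, zero_mul, ← sum_filter, hfilter]
  calc ∑ w ∈ Icc d n, a w * (x ^ (n - w) * y ^ w)
      = ∑ s ∈ Icc d n, shiftCoeff n d a s * ((x - y) ^ (n - s) * y ^ s) :=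
        sum_mul_pow_eq_sum_shiftCoeff n d a x y
    _ = ∑ s ∈ Icc d m, shiftCoeff n d a s * ((x - y) ^ (n - s) * y ^ s) := by
        refine (sum_subset (Icc_subset_Icc_right hn) fun s hs hsm => ?_).symm
        rw [hhigh s hs, if_neg (by simp only [mem_Icc] at hs hsm; omega), zero_mul]
    _ = ∑ w ∈ Icc d m, a w * lamPoly n d r w x y := by
        simp only [lamPoly, ← sum_mul_sum_choose_eq_sum_shiftCoeff, mul_assoc]
        rfl

theorem wenum_determined_by_low_weights_general {F : Type*} [Field F] [Fintype F] [DecidableEq F]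
    {n k d dperp g gperp q : ℕ}
    (C : Submodule F (Fin n → F))
    (hg : 1 ≤ g) (hgdef : n + 1 = k + d + g)
    (hgp : 1 ≤ gperp) (hgpdef : k + 1 = dperp + gperp)
    (c : ℕ → ℚ)
    (hW : ∀ x y : ℚ, wEnum C d x y =
      Mds q n (n + 1 - k) x y +
        ((q : ℚ) - 1) * ∑ i ∈ Finset.range (g + gperp - 1),
          c i * ((n.choose (d + i) : ℚ)) * (x - y) ^ (n - d - i) * y ^ (d + i)) :
    ∀ x y : ℚ, wEnum C d x y =
      (∑ w ∈ Finset.Icc d (d + g + gperp - 2),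
        (wtCount C w : ℚ) * lamPoly n d (g + gperp) w x y) +
      (Mds q n (n + 1 - k) x y -
        ∑ w ∈ Finset.Icc (d + g) (d + g + gperp - 2),
          MdsCoeff q n (n + 1 - k) w * lamPoly n d (g + gperp) w x y) := by
  intro x y
  have hs : n + 1 - k = d + g := by omega
  have hm : d + (g + gperp) - 2 = d + g + gperp - 2 := by rw [add_assoc]
  set a : ℕ → ℚ := fun w => wtCount C w - if d + g ≤ w then MdsCoeff q n (d + g) w else 0
  have hdiff : ∀ x y : ℚ, wEnum C d x y - Mds q n (d + g) x y =
      ∑ w ∈ Icc d n, a w * (x ^ (n - w) * y ^ w) := fun x y =>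
    calc wEnum C d x y - Mds q n (d + g) x y
        = ∑ w ∈ Icc d n, (wtCount C w : ℚ) * (x ^ (n - w) * y ^ w) -
            ∑ w ∈ Icc (d + g) n, MdsCoeff q n (d + g) w * (x ^ (n - w) * y ^ w) := by
          simp only [wEnum, Mds, mul_assoc]
          ring
      _ = _ := sum_Icc_sub_sum_Icc (Nat.le_add_right d g) _ _ _
  have hlow : ∀ x y : ℚ, ∑ w ∈ Icc d n, a w * (x ^ (n - w) * y ^ w) =
      ∑ s ∈ Icc d (d + (g + gperp) - 2),
        ((q : ℚ) - 1) * c (s - d) * n.choose s * ((x - y) ^ (n - s) * y ^ s) := fun x y => by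
    rw [← hdiff, hW, hs, add_sub_cancel_left, hm, mul_sum,
      ← Ico_add_one_right_eq_Icc, sum_Ico_eq_sum_range,
      show d + g + gperp - 2 + 1 - d = g + gperp - 1 by omega]
    refine sum_congr rfl fun i _ => ?_
    rw [Nat.add_sub_cancel_left, Nat.sub_sub]
    ring
  have hlam := sum_mul_pow_eq_sum_mul_lamPoly (by omega) a _ hlow x y
  rw [← hdiff, hm, ← sum_Icc_sub_sum_Icc (Nat.le_add_right d g)] at hlam
  rw [hs]
  linarith

/-- The weight enumerator of a linear code `C ⊆ F_q^n` of dimension `k`, minimum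
distance `d` and genus `g = n+1−k−d ≥ 1`, whose dual has minimum distance `d⊥`
and genus `g⊥ = k+1−d⊥ ≥ 1`, is determined by the numbers
`W_C^{(d)}, …, W_C^{(d+g+g⊥−2)}` via
`W_C = Σ_{w=d}^{d+r−2} W_C^{(w)} λ_w + Λ`, with
`Λ = M_{n,n+1−k} − Σ_{w=d+g}^{d+r−2} M_{n,n+1−k}^{(w)} λ_w`. -/
theorem wenum_determined_by_low_weights {F : Type*} [Field F] [Fintype F] [DecidableEq F]
    {n k d dperp g gperp q : ℕ}
    (C Cd : Submodule F (Fin n → F))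
    (hq : q = Fintype.card F)
    (hk : Module.finrank F C = k)
    (hd1 : ∀ c ∈ C, c ≠ 0 → d ≤ hammingNorm c)
    (hd2 : ∃ c ∈ C, c ≠ 0 ∧ hammingNorm c = d)
    (hCd : ∀ y : Fin n → F, y ∈ Cd ↔ ∀ x ∈ C, ∑ i, x i * y i = 0)
    (hdp1 : ∀ c ∈ Cd, c ≠ 0 → dperp ≤ hammingNorm c)
    (hdp2 : ∃ c ∈ Cd, c ≠ 0 ∧ hammingNorm c = dperp)
    (hg : 1 ≤ g) (hgdef : n + 1 = k + d + g)
    (hgp : 1 ≤ gperp) (hgpdef : k + 1 = dperp + gperp)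
    (c : ℕ → ℚ)
    (hW : ∀ x y : ℚ, wEnum C d x y =
      Mds q n (n + 1 - k) x y +
        ((q : ℚ) - 1) * ∑ i ∈ Finset.range (g + gperp - 1),
          c i * ((n.choose (d + i) : ℚ)) * (x - y) ^ (n - d - i) * y ^ (d + i)) :
    ∀ x y : ℚ, wEnum C d x y =
      (∑ w ∈ Finset.Icc d (d + g + gperp - 2),
        (wtCount C w : ℚ) * lamPoly n d (g + gperp) w x y) +
      (Mds q n (n + 1 - k) x y -
        ∑ w ∈ Finset.Icc (d + g) (d + g + gperp - 2),
          MdsCoeff q n (n + 1 - k) w * lamPoly n d (g + gperp) w x y) :=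
  wenum_determined_by_low_weights_general C hg hgdef hgp hgpdef c hW
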